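/- Let T be an n×n complex matrix and α ∈ ℝ. Then SRG(T − αI) = SRG(T) − α, i.e. the SRG of the shifted operator is the translate of SRG(T) by −α. -/

import Mathlib

/-! For a unit vector `x` the SRG point of `(x, y)` in Cartesian coordinates is
`Re⟪x, y⟫ + i √(‖y‖² - Re⟪x, y⟫²)`, together with its conjugate. A real shift
`y ↦ y - α x` lowers `Re⟪x, y⟫` by `α` and leaves `‖y‖² - Re⟪x, y⟫²` unchanged,
so it translates both points by `-α`. -/

open scoped InnerProductSpace
open Matrix

/-- The scaled relative graph (SRG) of an `n × n` complex matrix `T`: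
the polar points of all input-output pairs `(x, Tx)` with `‖x‖ = 1`
(both sign choices of the angle), together with `0` when `Tx = 0` for a unit `x`. -/
noncomputable def srg {n : ℕ} (T : Matrix (Fin n) (Fin n) ℂ) : Set ℂ :=
  {w : ℂ | ∃ x : EuclideanSpace ℂ (Fin n), ‖x‖ = 1 ∧
    ((Matrix.toEuclideanLin T x ≠ 0 ∧
      (w = ((‖Matrix.toEuclideanLin T x‖ / ‖x‖ : ℝ) : ℂ) *
          Complex.exp (Complex.I * (Real.arccos ((⟪x, Matrix.toEuclideanLin T x⟫_ℂ).re /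
            (‖Matrix.toEuclideanLin T x‖ * ‖x‖)) : ℝ)) ∨
       w = ((‖Matrix.toEuclideanLin T x‖ / ‖x‖ : ℝ) : ℂ) *
          Complex.exp (-(Complex.I * (Real.arccos ((⟪x, Matrix.toEuclideanLin T x⟫_ℂ).re /
            (‖Matrix.toEuclideanLin T x‖ * ‖x‖)) : ℝ))))) ∨
     (Matrix.toEuclideanLin T x = 0 ∧ w = 0))}

open Complex ComplexConjugate

lemma Complex.ofReal_mul_exp_arccos_div {r c : ℝ} (hr : 0 < r) (hc : |c| ≤ r) :
    (r : ℂ) * exp (I * (Real.arccos (c / r) : ℝ)) = ⟨c, √(r ^ 2 - c ^ 2)⟩ := by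
  obtain ⟨hlo, hhi⟩ := abs_le.mp hc
  have hsin : √(1 - (c / r) ^ 2) = √(r ^ 2 - c ^ 2) / r := by
    rw [div_pow, one_sub_div (by positivity), Real.sqrt_div' _ (by positivity),
      Real.sqrt_sq hr.le]
  rw [mul_comm I, exp_mul_I, ← ofReal_cos, ← ofReal_sin,
    Real.cos_arccos (by rw [le_div_iff₀ hr]; linarith) (by rw [div_le_one hr]; linarith),
    Real.sin_arccos, hsin]
  apply Complex.ext <;> simp <;> field_simp

lemma Complex.ofReal_mul_exp_neg_arccos_div {r c : ℝ} (hr : 0 < r) (hc : |c| ≤ r) :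
    (r : ℂ) * exp (-(I * (Real.arccos (c / r) : ℝ))) = conj ⟨c, √(r ^ 2 - c ^ 2)⟩ := by
  rw [← ofReal_mul_exp_arccos_div hr hc, map_mul, conj_ofReal, ← exp_conj]
  simp

section InnerProductSpace

variable {E : Type*} [NormedAddCommGroup E] [InnerProductSpace ℂ E]

noncomputable def srgPoint (x y : E) : ℂ :=
  ⟨(⟪x, y⟫_ℂ).re, √(‖y‖ ^ 2 - (⟪x, y⟫_ℂ).re ^ 2)⟩

@[simp]
lemma srgPoint_zero_right (x : E) : srgPoint x (0 : E) = 0 := by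
  simp [srgPoint, Complex.ext_iff]

lemma re_inner_sub_smul_of_norm_eq_one {x : E} (hx : ‖x‖ = 1) (y : E) (α : ℝ) :
    (⟪x, y - (α : ℂ) • x⟫_ℂ).re = (⟪x, y⟫_ℂ).re - α := by
  simp [inner_self_eq_norm_sq_to_K, hx]

lemma norm_sub_smul_sq_of_norm_eq_one {x : E} (hx : ‖x‖ = 1) (y : E) (α : ℝ) :
    ‖y - (α : ℂ) • x‖ ^ 2 = ‖y‖ ^ 2 - 2 * α * (⟪x, y⟫_ℂ).re + α ^ 2 := by
  rw [norm_sub_rev, @norm_sub_sq ℂ, inner_smul_left, norm_smul, hx]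
  simp
  ring

lemma srgPoint_sub_smul {x : E} (hx : ‖x‖ = 1) (y : E) (α : ℝ) :
    srgPoint x (y - (α : ℂ) • x) = srgPoint x y - α := by
  apply Complex.ext <;>
    simp only [srgPoint, norm_sub_smul_sq_of_norm_eq_one hx, re_inner_sub_smul_of_norm_eq_one hx,
      sub_re, sub_im, ofReal_re, ofReal_im, sub_zero]
  ring_nf

end InnerProductSpace

lemma mem_srg_iff {n : ℕ} (T : Matrix (Fin n) (Fin n) ℂ) (w : ℂ) :
    w ∈ srg T ↔ ∃ x : EuclideanSpace ℂ (Fin n), ‖x‖ = 1 ∧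
      (w = srgPoint x (toEuclideanLin T x) ∨ w = conj (srgPoint x (toEuclideanLin T x))) := by
  refine exists_congr fun x => and_congr_right fun hx => ?_
  set y := toEuclideanLin T x
  by_cases hy : y = 0
  · simp [hy]
  · have hc : |(⟪x, y⟫_ℂ).re| ≤ ‖y‖ :=
      (abs_re_le_norm _).trans ((norm_inner_le_norm x y).trans_eq (by rw [hx, one_mul]))
    simp only [hx, div_one, mul_one, ofReal_mul_exp_arccos_div (norm_pos_iff.mpr hy) hc,
      ofReal_mul_exp_neg_arccos_div (norm_pos_iff.mpr hy) hc, srgPoint]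
    simp [hy]

lemma toEuclideanLin_sub_smul_one {𝕜 ι : Type*} [RCLike 𝕜] [Fintype ι] [DecidableEq ι]
    (T : Matrix ι ι 𝕜) (a : 𝕜) (x : EuclideanSpace 𝕜 ι) :
    toEuclideanLin (T - a • 1) x = toEuclideanLin T x - a • x := by
  simp [map_sub]

theorem srg_shift {n : ℕ} (T : Matrix (Fin n) (Fin n) ℂ) (α : ℝ) :
    srg (T - (α : ℂ) • (1 : Matrix (Fin n) (Fin n) ℂ)) =
      (fun w : ℂ => w - (α : ℂ)) '' srg T := by
  ext w
  simp only [Set.mem_image, mem_srg_iff, toEuclideanLin_sub_smul_one]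
  constructor
  · rintro ⟨x, hx, h⟩
    refine ⟨w + α, ⟨x, hx, ?_⟩, add_sub_cancel_right w _⟩
    rw [srgPoint_sub_smul hx, map_sub, conj_ofReal] at h
    rcases h with rfl | rfl <;> simp
  · rintro ⟨v, ⟨x, hx, hv⟩, rfl⟩
    refine ⟨x, hx, ?_⟩
    rw [srgPoint_sub_smul hx, map_sub, conj_ofReal]
    rcases hv with rfl | rfl <;> simp
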